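/- Let I be a finite nonempty set of lanes, U a nonempty control set, and fix a grid point x_j and a time step Δt > 0. Suppose the interpolation operator has the form 𝕀[V](y, α) = Σ_{i=1}^{M} γ_i(y)·V(x_i, α) with weights satisfying γ_i(y) ≥ 0 and Σ_i γ_i(y) = 1 for every y. Define Σ(x_j, α, V) = inf_{u ∈ U} { Δt·ℓ(x_j, α) + 𝕀[V](x_j + Δt·h(x_j, α, u), α) } and Ψ(x_j, α, V) = min_{β ∈ I}{ V(x_j, β) + C(x_j, α, β) }, and let S(x_j, α, V) = min{ Ψ(x_j, α, V), Σ(x_j, α, V) }. Then the scheme operator S is monotone: if V(x_i, β) ≤ W(x_i, β) for all grid nodes (x_i, β), then S(x_j, α, V) ≤ S(x_j, α, W) for all (x_j, α). -/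

import Mathlib

/-!
Both parts of the scheme are monotone in the nodal values: the switching part `Ψ` is a
minimum of `V(x_j, β) + C`, and the semi-Lagrangian part `Σ` is an infimum of convex
combinations of nodal values. The only subtlety is that `⨅` over the control set is a
conditionally complete infimum, so one needs the family for `V` to be bounded below; a
convex combination of nodal values is bounded below by the smallest of them.
-/

theorem iInf_le_sum_mul {ι : Type*} [Fintype ι] {w : ι → ℝ} (hw₀ : ∀ i, 0 ≤ w i)
    (hw₁ : ∑ i, w i = 1) (f : ι → ℝ) : ⨅ i, f i ≤ ∑ i, w i * f i :=
  calc ⨅ i, f i = ∑ i, w i * ⨅ k, f k := by rw [← Finset.sum_mul, hw₁, one_mul]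
    _ ≤ ∑ i, w i * f i := by
      gcongr with i
      · exact hw₀ i
      · exact ciInf_le (Finite.bddBelow_range f) i

theorem iInf_add_sum_mul_mono {ι U : Type*} [Fintype ι] {w : U → ι → ℝ}
    (hw₀ : ∀ u i, 0 ≤ w u i) (hw₁ : ∀ u, ∑ i, w u i = 1) (c : ℝ) {f g : ι → ℝ}
    (hfg : ∀ i, f i ≤ g i) :
    ⨅ u, (c + ∑ i, w u i * f i) ≤ ⨅ u, (c + ∑ i, w u i * g i) := by
  refine ciInf_mono ⟨c + ⨅ i, f i, ?_⟩ fun u => ?_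
  · rintro _ ⟨u, rfl⟩
    exact add_le_add_right (iInf_le_sum_mul (hw₀ u) (hw₁ u) f) c
  · gcongr with i
    · exact hw₀ u i
    · exact hfg i

theorem sl_hjb_scheme_monotone_general {I U : Type*} [Fintype I] [Nonempty I]
    (M : ℕ) (x : Fin M → ℝ) (Δt : ℝ)
    (γ : Fin M → ℝ → ℝ)
    (hγpos : ∀ (i : Fin M) (y : ℝ), 0 ≤ γ i y)
    (hγsum : ∀ y : ℝ, ∑ i, γ i y = 1)
    (ℓ : ℝ → I → ℝ) (h : ℝ → I → U → ℝ) (C : ℝ → I → I → ℝ)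
    (Interp : (Fin M → I → ℝ) → ℝ → I → ℝ)
    (hInterp : ∀ (V : Fin M → I → ℝ) (y : ℝ) (α : I),
      Interp V y α = ∑ i, γ i y * V i α)
    (Ψ : Fin M → I → (Fin M → I → ℝ) → ℝ)
    (hΨ : ∀ (j : Fin M) (α : I) (V : Fin M → I → ℝ),
      Ψ j α V = Finset.univ.inf' Finset.univ_nonempty (fun β => V j β + C (x j) α β))
    (Sig : Fin M → I → (Fin M → I → ℝ) → ℝ)
    (hSig : ∀ (j : Fin M) (α : I) (V : Fin M → I → ℝ),
      Sig j α V = ⨅ u : U, (Δt * ℓ (x j) α + Interp V (x j + Δt * h (x j) α u) α))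
    (S : Fin M → I → (Fin M → I → ℝ) → ℝ)
    (hS : ∀ (j : Fin M) (α : I) (V : Fin M → I → ℝ),
      S j α V = min (Ψ j α V) (Sig j α V))
    (V W : Fin M → I → ℝ) (hVW : ∀ (i : Fin M) (β : I), V i β ≤ W i β) :
    ∀ (j : Fin M) (α : I), S j α V ≤ S j α W := by
  intro j α
  rw [hS, hS, hΨ, hΨ, hSig, hSig]
  simp only [hInterp]
  refine min_le_min ?_ <| iInf_add_sum_mul_mono
    (w := fun u i => γ i (x j + Δt * h (x j) α u)) (fun u i => hγpos i _) (fun u => hγsum _) _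
    fun i => hVW i α
  gcongr with β
  exact hVW j β

/-- The semi-Lagrangian scheme operator
`S(x_j, α, V) = min{ Ψ(x_j, α, V), Σ(x_j, α, V) }` for the hybrid HJB
quasi-variational inequality, with interpolation weights nonnegative and
summing to one, is monotone: `V ≤ W` on grid nodes implies `S V ≤ S W`. -/
theorem sl_hjb_scheme_monotone {I U : Type*} [Fintype I] [Nonempty I] [Nonempty U]
    (M : ℕ) (x : Fin M → ℝ) (Δt : ℝ) (hΔt : 0 < Δt)
    (γ : Fin M → ℝ → ℝ)
    (hγpos : ∀ (i : Fin M) (y : ℝ), 0 ≤ γ i y)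
    (hγsum : ∀ y : ℝ, ∑ i, γ i y = 1)
    (ℓ : ℝ → I → ℝ) (h : ℝ → I → U → ℝ) (C : ℝ → I → I → ℝ)
    (Interp : (Fin M → I → ℝ) → ℝ → I → ℝ)
    (hInterp : ∀ (V : Fin M → I → ℝ) (y : ℝ) (α : I),
      Interp V y α = ∑ i, γ i y * V i α)
    (Ψ : Fin M → I → (Fin M → I → ℝ) → ℝ)
    (hΨ : ∀ (j : Fin M) (α : I) (V : Fin M → I → ℝ),
      Ψ j α V = Finset.univ.inf' Finset.univ_nonempty (fun β => V j β + C (x j) α β))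
    (Sig : Fin M → I → (Fin M → I → ℝ) → ℝ)
    (hSig : ∀ (j : Fin M) (α : I) (V : Fin M → I → ℝ),
      Sig j α V = ⨅ u : U, (Δt * ℓ (x j) α + Interp V (x j + Δt * h (x j) α u) α))
    (S : Fin M → I → (Fin M → I → ℝ) → ℝ)
    (hS : ∀ (j : Fin M) (α : I) (V : Fin M → I → ℝ),
      S j α V = min (Ψ j α V) (Sig j α V))
    (V W : Fin M → I → ℝ) (hVW : ∀ (i : Fin M) (β : I), V i β ≤ W i β) :
    ∀ (j : Fin M) (α : I), S j α V ≤ S j α W :=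
  sl_hjb_scheme_monotone_general M x Δt γ hγpos hγsum ℓ h C Interp hInterp Ψ hΨ Sig hSig S hS V W
    hVW
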